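/- arXiv:math/0506073 — 7 statements merged into one kernel-verified Lean document; each statement's English description precedes it below -/
import Mathlib

section
/- If A = B + C where B is row bounded by L (each row of B has ℓ²-norm at most L) and C is column bounded by M, then every matrix S with |s_{ij}| ≤ a_{ij} has Schur multiplier norm at most L + M. -/
open scoped ENNReal ComplexOrder

noncomputable def opNorm2 {m : Type*} [Fintype m] [DecidableEq m] (M : Matrix m m ℂ) : ℝ :=
  ‖Matrix.toEuclideanCLM (𝕜 := ℂ) M‖

noncomputable def schurNorm {m : Type*} [Fintype m] [DecidableEq m] (M : Matrix m m ℂ) : ℝ :=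
  ⨆ X : {X : Matrix m m ℂ // opNorm2 X ≤ 1}, opNorm2 (M.hadamard X.1)

noncomputable def schurNormENN (A : ℕ → ℕ → ℂ) : ℝ≥0∞ :=
  ⨆ n : ℕ, ENNReal.ofReal (schurNorm (Matrix.of fun i j : Fin n => A i j))

noncomputable def schurBound (P : Set (ℕ × ℕ)) : ℝ≥0∞ :=
  ⨆ S : {S : ℕ → ℕ → ℂ //
      (∀ i j, ‖S i j‖ ≤ 1) ∧ ∀ i j, (i, j) ∉ P → S i j = 0},
    schurNormENN S.1

noncomputable def matAbs {m : Type*} [Fintype m] [DecidableEq m] (T : Matrix m m ℂ) :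
    Matrix m m ℂ :=
  (Matrix.posSemidef_conjTranspose_mul_self T).1.eigenvectorUnitary.1 *
    Matrix.diagonal ((↑) ∘ (√·) ∘ (Matrix.posSemidef_conjTranspose_mul_self T).1.eigenvalues) *
    (star (Matrix.posSemidef_conjTranspose_mul_self T).1.eigenvectorUnitary : Matrix m m ℂ)

/-! Split every entry proportionally, `s = (b/(b+c)) s + (c/(b+c)) s`, into a part dominated by
`B` and a part dominated by `C`. Entrywise multiplication by a matrix whose rows have ℓ²-norm at
most `L` has norm at most `L`: apply Cauchy–Schwarz in each row and use that every column of `X`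
has norm at most `‖X‖`. Passing to adjoints gives the same for columns, and the triangle
inequality bounds every finite section of `S` by `L + M`. -/

open Finset Matrix

section OperatorNorm

variable {m : Type*} [Fintype m] [DecidableEq m]

open scoped Matrix.Norms.L2Operator in
theorem opNorm2_conjTranspose (X : Matrix m m ℂ) : opNorm2 Xᴴ = opNorm2 X :=
  l2_opNorm_conjTranspose X

theorem sum_sq_norm_col_le_opNorm2_sq (X : Matrix m m ℂ) (j : m) :
    ∑ i, ‖X i j‖ ^ 2 ≤ opNorm2 X ^ 2 := by
  have hcol : toEuclideanCLM (𝕜 := ℂ) X (EuclideanSpace.single j 1) = WithLp.toLp 2 (X · j) := by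
    ext i
    simp [mulVec, dotProduct, PiLp.single_apply]
  have h := (toEuclideanCLM (𝕜 := ℂ) X).le_opNorm (EuclideanSpace.single j 1)
  rw [hcol, PiLp.norm_single, norm_one, mul_one] at h
  simpa [opNorm2, EuclideanSpace.norm_sq_eq] using pow_le_pow_left₀ (norm_nonneg _) h 2

theorem opNorm2_hadamard_le_of_row {T : Matrix m m ℂ} {L : ℝ} (hL : 0 ≤ L)
    (hT : ∀ i, ∑ j, ‖T i j‖ ^ 2 ≤ L ^ 2) (X : Matrix m m ℂ) :
    opNorm2 (T.hadamard X) ≤ L * opNorm2 X := by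
  have hX : 0 ≤ opNorm2 X := norm_nonneg _
  refine ContinuousLinearMap.opNorm_le_bound _ (by positivity) fun x => ?_
  refine le_of_sq_le_sq ?_ (by positivity)
  have hrow : ∀ i, ‖∑ j, T i j * X i j * x j‖ ^ 2 ≤ L ^ 2 * ∑ j, ‖X i j‖ ^ 2 * ‖x j‖ ^ 2 := by
    intro i
    calc ‖∑ j, T i j * X i j * x j‖ ^ 2 ≤ (∑ j, ‖T i j‖ * (‖X i j‖ * ‖x j‖)) ^ 2 := by
          gcongr
          refine (norm_sum_le _ _).trans_eq ?_
          simp only [norm_mul, mul_assoc]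
      _ ≤ (∑ j, ‖T i j‖ ^ 2) * ∑ j, (‖X i j‖ * ‖x j‖) ^ 2 := sum_mul_sq_le_sq_mul_sq _ _ _
      _ ≤ L ^ 2 * ∑ j, ‖X i j‖ ^ 2 * ‖x j‖ ^ 2 := by
          simp only [mul_pow]
          gcongr
          exact hT i
  calc ‖toEuclideanCLM (𝕜 := ℂ) (T.hadamard X) x‖ ^ 2
      = ∑ i, ‖∑ j, T i j * X i j * x j‖ ^ 2 := by
        simp [EuclideanSpace.norm_sq_eq, mulVec, dotProduct]
    _ ≤ ∑ i, L ^ 2 * ∑ j, ‖X i j‖ ^ 2 * ‖x j‖ ^ 2 := sum_le_sum fun i _ => hrow i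
    _ = L ^ 2 * ∑ j, (∑ i, ‖X i j‖ ^ 2) * ‖x j‖ ^ 2 := by
        simp only [← mul_sum, sum_mul]
        rw [sum_comm]
    _ ≤ L ^ 2 * ∑ j, opNorm2 X ^ 2 * ‖x j‖ ^ 2 := by
        gcongr with j
        exact sum_sq_norm_col_le_opNorm2_sq X j
    _ = (L * opNorm2 X * ‖x‖) ^ 2 := by
        rw [← mul_sum, ← EuclideanSpace.norm_sq_eq]
        ring

theorem opNorm2_hadamard_le_of_col {U : Matrix m m ℂ} {M : ℝ} (hM : 0 ≤ M)
    (hU : ∀ j, ∑ i, ‖U i j‖ ^ 2 ≤ M ^ 2) (X : Matrix m m ℂ) :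
    opNorm2 (U.hadamard X) ≤ M * opNorm2 X := by
  have hUH : ∀ i, ∑ j, ‖Uᴴ i j‖ ^ 2 ≤ M ^ 2 := fun i => by
    simpa [conjTranspose_apply] using hU i
  rw [← opNorm2_conjTranspose, conjTranspose_hadamard, hadamard_comm, ← opNorm2_conjTranspose X]
  exact opNorm2_hadamard_le_of_row hM hUH Xᴴ

theorem schurNorm_le_of_eq_add {S T U : Matrix m m ℂ} {L M : ℝ} (hL : 0 ≤ L) (hM : 0 ≤ M)
    (hS : S = T + U) (hT : ∀ i, ∑ j, ‖T i j‖ ^ 2 ≤ L ^ 2)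
    (hU : ∀ j, ∑ i, ‖U i j‖ ^ 2 ≤ M ^ 2) :
    schurNorm S ≤ L + M := by
  refine Real.iSup_le (fun X => ?_) (by positivity)
  obtain ⟨X, hX⟩ := X
  calc opNorm2 (S.hadamard X) ≤ opNorm2 (T.hadamard X) + opNorm2 (U.hadamard X) := by
        rw [hS, add_hadamard, opNorm2, opNorm2, opNorm2, map_add]
        exact norm_add_le _ _
    _ ≤ L * 1 + M * 1 := by
        gcongr
        · exact (opNorm2_hadamard_le_of_row hL hT X).trans (by gcongr)
        · exact (opNorm2_hadamard_le_of_col hM hU X).trans (by gcongr)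
    _ = L + M := by ring

end OperatorNorm

theorem exists_add_eq_of_norm_le_add {E : Type*} [SeminormedAddCommGroup E] [NormedSpace ℝ E]
    {s : E} {b c : ℝ} (hb : 0 ≤ b) (hc : 0 ≤ c) (hs : ‖s‖ ≤ b + c) :
    ∃ t u, t + u = s ∧ ‖t‖ ≤ b ∧ ‖u‖ ≤ c := by
  rcases hc.eq_or_lt with rfl | hc
  · exact ⟨s, 0, add_zero s, by simpa using hs, by simp⟩
  have hbc : 0 < b + c := by positivity
  refine ⟨(b / (b + c)) • s, (c / (b + c)) • s, ?_, ?_, ?_⟩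
  · rw [← add_smul, ← add_div, div_self hbc.ne', one_smul]
  · rw [norm_smul, Real.norm_of_nonneg (by positivity)]
    calc b / (b + c) * ‖s‖ ≤ b / (b + c) * (b + c) := by gcongr
      _ = b := div_mul_cancel₀ b hbc.ne'
  · rw [norm_smul, Real.norm_of_nonneg (by positivity)]
    calc c / (b + c) * ‖s‖ ≤ c / (b + c) * (b + c) := by gcongr
      _ = c := div_mul_cancel₀ c hbc.ne'

theorem sum_fin_le_of_tsum_ofReal_le {f : ℕ → ℝ} (hf : ∀ k, 0 ≤ f k) {a : ℝ} (ha : 0 ≤ a)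
    (h : ∑' k, ENNReal.ofReal (f k) ≤ ENNReal.ofReal a) (n : ℕ) :
    ∑ k : Fin n, f k ≤ a := by
  rw [← ENNReal.ofReal_le_ofReal_iff ha, Fin.sum_univ_eq_sum_range,
    ENNReal.ofReal_sum_of_nonneg fun k _ => hf k]
  exact (ENNReal.sum_le_tsum _).trans h

theorem stmt_2 (A B C : ℕ → ℕ → ℝ) (L M : ℝ) (hL : 0 ≤ L) (hM : 0 ≤ M)
    (hB : ∀ i j, 0 ≤ B i j) (hC : ∀ i j, 0 ≤ C i j)
    (hsum : ∀ i j, A i j = B i j + C i j)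
    (hrow : ∀ i, ∑' j, ENNReal.ofReal ((B i j) ^ 2) ≤ ENNReal.ofReal (L ^ 2))
    (hcol : ∀ j, ∑' i, ENNReal.ofReal ((C i j) ^ 2) ≤ ENNReal.ofReal (M ^ 2))
    (S : ℕ → ℕ → ℂ) (hS : ∀ i j, ‖S i j‖ ≤ A i j) :
    schurNormENN S ≤ ENNReal.ofReal (L + M) := by
  choose T U hTU hT hU using fun i j =>
    exists_add_eq_of_norm_le_add (hB i j) (hC i j) ((hS i j).trans_eq (hsum i j))
  refine iSup_le fun n => ENNReal.ofReal_le_ofReal <|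
    schurNorm_le_of_eq_add (T := of fun i j : Fin n => T i j) (U := of fun i j : Fin n => U i j)
      hL hM ?_ (fun i => ?_) (fun j => ?_)
  · ext i j
    exact (hTU i j).symm
  · refine (sum_le_sum fun (j : Fin n) _ => pow_le_pow_left₀ (norm_nonneg _) (hT i j) 2).trans ?_
    exact sum_fin_le_of_tsum_ofReal_le (fun _ => sq_nonneg _) (sq_nonneg L) (hrow i) n
  · refine (sum_le_sum fun (i : Fin n) _ => pow_le_pow_left₀ (norm_nonneg _) (hU i j) 2).trans ?_
    exact sum_fin_le_of_tsum_ofReal_le (fun _ => sq_nonneg _) (sq_nonneg M) (hcol j) n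
end

section
/- A pattern P ⊆ ℕ×ℕ is the union of a set with at most m entries in each row and a set with at most n entries in each column if and only if for every pair of finite subsets R, C ⊆ ℕ one has |P ∩ (R × C)| ≤ m|R| + n|C|. -/
open scoped ENNReal ComplexOrder

/-!
Necessity is counting: the entries of `Q` inside `R × C` lie in `|R|` rows, each holding at most
`m` of them, and symmetrically for `R`. For sufficiency, give every row `m` slots and every
column `n` slots, and let each entry `(i, j)` of `P` choose a slot of row `i` or of column `j`,
different entries choosing different slots. For a finite set of entries meeting the rows `R` and
columns `C`, Hall's condition reads `|entries| ≤ m |R| + n |C|`, which is the hypothesis. Hall's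
theorem for infinite families of finite sets (a compactness argument) then yields the
assignment, and the entries assigned to rows form `Q`.
-/

section RowBounded

variable {α β : Type*}

theorem Set.ncard_inter_prod_le_of_rows {Q : Set (α × β)} {m : ℕ}
    (hQ : ∀ i, {j | (i, j) ∈ Q}.encard ≤ m) (R : Finset α) (C : Set β) :
    (Q ∩ (↑R ×ˢ C)).ncard ≤ m * R.card := by
  have hcover : Q ∩ (↑R ×ˢ C) ⊆ ⋃ i ∈ R, Prod.mk i '' {j | (i, j) ∈ Q} := by
    rintro ⟨i, j⟩ ⟨hQij, hi, -⟩
    exact Set.mem_biUnion hi ⟨j, hQij, rfl⟩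
  have hencard : (Q ∩ (↑R ×ˢ C)).encard ≤ (m * R.card : ℕ) :=
    calc (Q ∩ (↑R ×ˢ C)).encard
        ≤ ∑ i ∈ R, (Prod.mk i '' {j | (i, j) ∈ Q}).encard :=
          (Set.encard_le_encard hcover).trans (Finset.set_encard_biUnion_le _ _)
      _ ≤ ∑ _i ∈ R, (m : ℕ∞) :=
          Finset.sum_le_sum fun i _ => (Set.encard_image_le _ _).trans (hQ i)
      _ = (m * R.card : ℕ) := by simp [mul_comm]
  exact (Set.encard_le_coe_iff_finite_ncard_le.1 hencard).2

theorem Set.ncard_inter_prod_le_of_cols {Q : Set (α × β)} {n : ℕ}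
    (hQ : ∀ j, {i | (i, j) ∈ Q}.encard ≤ n) (R : Set α) (C : Finset β) :
    (Q ∩ (R ×ˢ ↑C)).ncard ≤ n * C.card := by
  have hswap : Prod.swap ⁻¹' (Q ∩ (R ×ˢ ↑C)) = Prod.swap ⁻¹' Q ∩ (↑C ×ˢ R) := by
    rw [Set.preimage_inter, Set.preimage_swap_prod]
  rw [← Set.ncard_preimage_of_injective_subset_range Prod.swap_injective
    (by simp [Prod.swap_surjective.range_eq]), hswap]
  exact Set.ncard_inter_prod_le_of_rows hQ C R

end RowBounded

theorem Finset.exists_fiber_encard_le_of_card_le_sum_biUnion {ι α : Type*} [DecidableEq α]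
    (t : ι → Finset α) (c : α → ℕ) (h : ∀ s : Finset ι, s.card ≤ ∑ a ∈ s.biUnion t, c a) :
    ∃ g : ι → α, (∀ i, g i ∈ t i) ∧ ∀ a, {i | g i = a}.encard ≤ c a := by
  let copies : Finset α → Finset (Σ a, Fin (c a)) := fun u => u.sigma fun _ => univ
  have hHall : ∀ s : Finset ι, s.card ≤ (s.biUnion (copies ∘ t)).card := by
    intro s
    have hcopies : s.biUnion (copies ∘ t) = copies (s.biUnion t) := by ext; simp [copies]
    simpa [hcopies, copies, card_sigma] using h s
  obtain ⟨F, hF, hFt⟩ := (all_card_le_biUnion_card_iff_exists_injective _).1 hHall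
  refine ⟨fun i => (F i).1, fun i => (mem_sigma.1 (hFt i)).1, fun a => ?_⟩
  calc {i | (F i).1 = a}.encard ≤ (copies {a} : Set (Σ a, Fin (c a))).encard :=
        Set.encard_le_encard_of_injOn (fun i hi => by simpa [copies] using hi) hF.injOn
    _ = c a := by rw [Set.encard_coe_eq_coe_finsetCard, card_sigma]; simp

section Decomposition

variable {α β : Type*} [DecidableEq α] [DecidableEq β]

theorem Finset.card_le_of_ncard_inter_prod_le {P : Set (α × β)} {m n : ℕ}
    (h : ∀ (R : Finset α) (C : Finset β), (P ∩ (↑R ×ˢ ↑C)).ncard ≤ m * R.card + n * C.card)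
    (s : Finset P) :
    s.card ≤ m * (s.image (·.1.1)).card + n * (s.image (·.1.2)).card := by
  have hsub : (s.map (Function.Embedding.subtype _) : Set (α × β)) ⊆
      P ∩ (↑(s.image (·.1.1)) ×ˢ ↑(s.image (·.1.2))) := by
    rw [Finset.coe_map]
    rintro _ ⟨e, he, rfl⟩
    exact ⟨e.2, Finset.mem_image_of_mem _ he, Finset.mem_image_of_mem _ he⟩
  have hfin : (P ∩ (↑(s.image (·.1.1)) ×ˢ ↑(s.image (·.1.2)))).Finite :=
    ((Finset.finite_toSet _).prod (Finset.finite_toSet _)).subset Set.inter_subset_right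
  calc s.card = (s.map (Function.Embedding.subtype _) : Set (α × β)).ncard := by
        rw [Set.ncard_coe_finset, Finset.card_map]
    _ ≤ _ := Set.ncard_le_ncard hsub hfin
    _ ≤ _ := h _ _

theorem Set.exists_rows_union_cols_of_ncard_inter_prod_le {P : Set (α × β)} {m n : ℕ}
    (h : ∀ (R : Finset α) (C : Finset β), (P ∩ (↑R ×ˢ ↑C)).ncard ≤ m * R.card + n * C.card) :
    ∃ Q R : Set (α × β), P = Q ∪ R ∧
      (∀ i, {j | (i, j) ∈ Q}.encard ≤ m) ∧ (∀ j, {i | (i, j) ∈ R}.encard ≤ n) := by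
  let lines : P → Finset (α ⊕ β) := fun e => ({e.1.1} : Finset α).disjSum {e.1.2}
  have hHall : ∀ s : Finset P,
      s.card ≤ ∑ x ∈ s.biUnion lines, Sum.elim (fun _ => m) (fun _ => n) x := by
    intro s
    have hlines : s.biUnion lines = (s.image (·.1.1)).disjSum (s.image (·.1.2)) := by
      ext (i | j) <;> simp [lines, eq_comm]
    simpa [hlines, Finset.sum_disjSum, mul_comm] using Finset.card_le_of_ncard_inter_prod_le h s
  obtain ⟨g, hg, hrow, hcol⟩ :
      ∃ g : P → α ⊕ β, (∀ e, g e = .inl e.1.1 ∨ g e = .inr e.1.2) ∧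
        (∀ i, {e | g e = .inl i}.encard ≤ m) ∧ (∀ j, {e | g e = .inr j}.encard ≤ n) := by
    obtain ⟨g, hg, hfib⟩ := Finset.exists_fiber_encard_le_of_card_le_sum_biUnion lines _ hHall
    refine ⟨g, fun e => ?_, fun i => hfib _, fun j => hfib _⟩
    cases hge : g e <;> simpa [lines, hge] using hg e
  refine ⟨Subtype.val '' {e | g e = .inl e.1.1}, Subtype.val '' {e | g e = .inr e.1.2},
    ?_, fun i => ?_, fun j => ?_⟩
  · have hcover : {e | g e = .inl e.1.1} ∪ {e | g e = .inr e.1.2} = Set.univ :=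
      Set.eq_univ_of_forall hg
    rw [← Set.image_union, hcover, Set.image_univ, Subtype.range_coe]
  · refine (Set.encard_le_encard ?_).trans ((Set.encard_image_le (·.1.2) _).trans (hrow i))
    rintro j ⟨e, he, hei⟩
    exact ⟨e, by simpa [hei] using he, congrArg Prod.snd hei⟩
  · refine (Set.encard_le_encard ?_).trans ((Set.encard_image_le (·.1.1) _).trans (hcol j))
    rintro i ⟨e, he, hej⟩
    exact ⟨e, by simpa [hej] using he, congrArg Prod.fst hej⟩

end Decomposition

theorem stmt_3 (P : Set (ℕ × ℕ)) (m n : ℕ) :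
    (∃ Q R : Set (ℕ × ℕ), P = Q ∪ R ∧
      (∀ i, {j | (i, j) ∈ Q}.encard ≤ m) ∧
      (∀ j, {i | (i, j) ∈ R}.encard ≤ n)) ↔
    (∀ R C : Finset ℕ,
      (P ∩ (↑R ×ˢ ↑C)).ncard ≤ m * R.card + n * C.card) := by
  constructor
  · rintro ⟨Q, R, rfl, hQ, hR⟩ Rs Cs
    calc ((Q ∪ R) ∩ (↑Rs ×ˢ ↑Cs)).ncard
        = (Q ∩ (↑Rs ×ˢ ↑Cs) ∪ R ∩ (↑Rs ×ˢ ↑Cs)).ncard := by rw [Set.union_inter_distrib_right]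
      _ ≤ (Q ∩ (↑Rs ×ˢ ↑Cs)).ncard + (R ∩ (↑Rs ×ˢ ↑Cs)).ncard := Set.ncard_union_le _ _
      _ ≤ m * Rs.card + n * Cs.card :=
        add_le_add (Set.ncard_inter_prod_le_of_rows hQ Rs _)
          (Set.ncard_inter_prod_le_of_cols hR _ Cs)
  · exact Set.exists_rows_union_cols_of_ncard_inter_prod_le
end

section
/- For S ⊆ ℕ, the Hankel pattern H(S) = {(i,j) : i+j ∈ S} is the union of a row finite set and a column finite set if and only if sup_{k≥0} |S ∩ (2^{k-1}, 2^k]| < ∞. -/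
open scoped ENNReal ComplexOrder

/-!
Split `H(S)` along the diagonal: the part with `j ≤ i` has at most `|S ∩ [i, 2i]|` entries in
row `i`, the part with `i ≤ j` has at most `|S ∩ [j, 2j]|` entries in column `j`, and each
interval `[n, 2n]` is covered by `{0}` and three consecutive dyadic blocks.

Conversely, let `H(S) ⊆ Q ∪ R` with at most `k` entries in each row of `Q` and each column of
`R`, and let `F ⊆ S` lie in the block `(m, M]`, so `M ≤ 2m + 2`. The `(m + 1) |F|` points
`(i, s - i)` with `i ≤ m`, `s ∈ F` lie in `H(S)` but use only `m + 1` rows and `M` columns, so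
`(m + 1) |F| ≤ k (m + 1) + k M ≤ 3k (m + 1)` and `|F| ≤ 3k`.
-/

section RowColumnFinite

variable {α β : Type*} [DecidableEq α] {k : ℕ}

lemma Finset.card_le_mul_card_image_fst_of_row_encard_le {Q : Set (α × β)}
    (hQ : ∀ i, {j | (i, j) ∈ Q}.encard ≤ k) {T : Finset (α × β)} (hT : ↑T ⊆ Q) :
    T.card ≤ k * (T.image Prod.fst).card := by
  refine T.card_le_mul_card_image k fun i _ => ?_
  have hrow : (↑(T.filter (·.1 = i)) : Set (α × β)) ⊆ Prod.mk i '' {j | (i, j) ∈ Q} := by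
    rintro ⟨i', j⟩ hp
    obtain ⟨hpT, rfl⟩ := Finset.mem_filter.mp hp
    exact ⟨j, hT hpT, rfl⟩
  have := ((Set.encard_le_encard hrow).trans (Set.encard_image_le _ _)).trans (hQ i)
  rwa [Set.encard_coe_eq_coe_finsetCard, Nat.cast_le] at this

lemma Finset.card_le_of_subset_union_of_row_col_encard_le [DecidableEq β] {Q R : Set (α × β)}
    (hQ : ∀ i, {j | (i, j) ∈ Q}.encard ≤ k) (hR : ∀ j, {i | (i, j) ∈ R}.encard ≤ k)
    {T : Finset (α × β)} (hT : ↑T ⊆ Q ∪ R) :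
    T.card ≤ k * (T.image Prod.fst).card + k * (T.image Prod.snd).card := by
  classical
  set TQ := T.filter (· ∈ Q)
  set TR := T.filter (· ∉ Q)
  have hTQ : TQ.card ≤ k * (T.image Prod.fst).card := by
    refine (card_le_mul_card_image_fst_of_row_encard_le hQ fun p hp => ?_).trans ?_
    · exact (Finset.mem_filter.mp hp).2
    · gcongr
      exact Finset.filter_subset _ _
  -- Columns of `R` are the rows of its transpose.
  have hTR : TR.card ≤ k * (T.image Prod.snd).card := by
    have hswap : ↑(TR.image Prod.swap) ⊆ Prod.swap ⁻¹' R := by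
      rintro _ hq
      obtain ⟨p, hp, rfl⟩ := Finset.mem_image.mp hq
      obtain ⟨hpT, hpQ⟩ := Finset.mem_filter.mp hp
      exact (hT hpT).resolve_left hpQ
    have := card_le_mul_card_image_fst_of_row_encard_le (Q := Prod.swap ⁻¹' R) hR hswap
    rw [Finset.card_image_of_injective _ Prod.swap_injective, Finset.image_image] at this
    refine this.trans ?_
    gcongr
    exact Finset.image_subset_image (Finset.filter_subset _ _)
  calc T.card = TQ.card + TR.card := (Finset.card_filter_add_card_filter_not _).symm
    _ ≤ _ := add_le_add hTQ hTR

end RowColumnFinite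

lemma card_mul_le_of_hankel_subset_union {S : Set ℕ} {Q R : Set (ℕ × ℕ)} {k : ℕ}
    (hH : {p : ℕ × ℕ | p.1 + p.2 ∈ S} ⊆ Q ∪ R)
    (hQ : ∀ i, {j | (i, j) ∈ Q}.encard ≤ k) (hR : ∀ j, {i | (i, j) ∈ R}.encard ≤ k)
    {m M : ℕ} {F : Finset ℕ} (hFS : ↑F ⊆ S) (hF : ∀ s ∈ F, m < s ∧ s ≤ M) :
    (m + 1) * F.card ≤ k * (m + 1) + k * M := by
  set T := (Finset.range (m + 1) ×ˢ F).image fun p => (p.1, p.2 - p.1)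
  have hinj :
      Set.InjOn (fun p : ℕ × ℕ => (p.1, p.2 - p.1)) ↑(Finset.range (m + 1) ×ˢ F) := by
    rintro ⟨i, s⟩ hp ⟨i', s'⟩ hp' he
    simp only [Finset.coe_product, Set.mem_prod, Finset.mem_coe, Finset.mem_range,
      Prod.mk.injEq] at hp hp' he ⊢
    have := (hF s hp.2).1
    have := (hF s' hp'.2).1
    omega
  have hT :
      ∀ p ∈ T, p.1 ∈ Finset.range (m + 1) ∧ p.2 ∈ Finset.Icc 1 M ∧ p.1 + p.2 ∈ S := by
    intro p hp
    obtain ⟨⟨i, s⟩, hmem, rfl⟩ := Finset.mem_image.mp hp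
    obtain ⟨hi, hs⟩ := Finset.mem_product.mp hmem
    have hi : i ≤ m := Nat.lt_succ_iff.mp (Finset.mem_range.mp hi)
    obtain ⟨hms, hsM⟩ := hF s hs
    refine ⟨Finset.mem_range.mpr (by omega), Finset.mem_Icc.mpr ⟨by omega, by omega⟩, ?_⟩
    rw [show i + (s - i) = s by omega]
    exact hFS hs
  have hfst : (T.image Prod.fst).card ≤ m + 1 := by
    simpa using Finset.card_le_card (Finset.image_subset_iff.mpr fun p hp => (hT p hp).1)
  have hsnd : (T.image Prod.snd).card ≤ M := by
    simpa using Finset.card_le_card (Finset.image_subset_iff.mpr fun p hp => (hT p hp).2.1)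
  have hcard : T.card = (m + 1) * F.card := by
    rw [Finset.card_image_of_injOn hinj, Finset.card_product, Finset.card_range]
  calc (m + 1) * F.card = T.card := hcard.symm
    _ ≤ k * (T.image Prod.fst).card + k * (T.image Prod.snd).card :=
      Finset.card_le_of_subset_union_of_row_col_encard_le hQ hR
        fun p hp => hH (hT p hp).2.2
    _ ≤ k * (m + 1) + k * M := by gcongr

lemma encard_inter_dyadic_le_of_hankel_subset_union {S : Set ℕ} {Q R : Set (ℕ × ℕ)} {k : ℕ}
    (hH : {p : ℕ × ℕ | p.1 + p.2 ∈ S} ⊆ Q ∪ R)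
    (hQ : ∀ i, {j | (i, j) ∈ Q}.encard ≤ k) (hR : ∀ j, {i | (i, j) ∈ R}.encard ≤ k)
    (t : ℕ) :
    (S ∩ Set.Ioc (2 ^ t / 2) (2 ^ t)).encard ≤ (3 * k : ℕ) := by
  have hfin : (S ∩ Set.Ioc (2 ^ t / 2) (2 ^ t)).Finite :=
    (Set.finite_Ioc _ _).subset Set.inter_subset_right
  set m := 2 ^ t / 2
  have hF := card_mul_le_of_hankel_subset_union (m := m) (M := 2 ^ t) hH hQ hR
    (F := hfin.toFinset) (fun s hs => (hfin.mem_toFinset.mp hs).1)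
    (fun s hs => (hfin.mem_toFinset.mp hs).2)
  have hM : 2 ^ t ≤ 2 * (m + 1) := by omega
  have : (m + 1) * hfin.toFinset.card ≤ (m + 1) * (3 * k) := by
    calc _ ≤ k * (m + 1) + k * 2 ^ t := hF
      _ ≤ k * (m + 1) + k * (2 * (m + 1)) := by gcongr
      _ = (m + 1) * (3 * k) := by ring
  rw [hfin.encard_eq_coe_toFinset_card, Nat.cast_le]
  exact Nat.le_of_mul_le_mul_left this m.succ_pos

lemma encard_inter_Icc_two_mul_le {S : Set ℕ} {L : ℕ}
    (hL : ∀ t : ℕ, (S ∩ Set.Ioc (2 ^ t / 2) (2 ^ t)).encard ≤ L) (n : ℕ) :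
    (S ∩ Set.Icc n (2 * n)).encard ≤ (3 * L + 1 : ℕ) := by
  set t := Nat.log 2 n
  have hcover : S ∩ Set.Icc n (2 * n) ⊆ {0} ∪ ((S ∩ Set.Ioc (2 ^ t / 2) (2 ^ t) ∪
      S ∩ Set.Ioc (2 ^ (t + 1) / 2) (2 ^ (t + 1))) ∪
      S ∩ Set.Ioc (2 ^ (t + 2) / 2) (2 ^ (t + 2))) := by
    rintro x ⟨hxS, hnx, hx2n⟩
    rcases Nat.eq_zero_or_pos x with rfl | hx
    · exact Or.inl rfl
    have hlow : 2 ^ t ≤ n := Nat.pow_log_le_self 2 (by omega)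
    have hhigh : n < 2 ^ (t + 1) := Nat.lt_pow_succ_log_self (by norm_num) n
    have h1 : 2 ^ (t + 1) = 2 * 2 ^ t := by ring
    have h2 : 2 ^ (t + 2) = 4 * 2 ^ t := by ring
    refine Or.inr ?_
    rcases le_or_gt x (2 ^ t) with hc | hc
    · exact Or.inl (Or.inl ⟨hxS, by omega, hc⟩)
    rcases le_or_gt x (2 ^ (t + 1)) with hc' | hc'
    · exact Or.inl (Or.inr ⟨hxS, by omega, hc'⟩)
    · exact Or.inr ⟨hxS, by omega, by omega⟩
  calc (S ∩ Set.Icc n (2 * n)).encard ≤ 1 + ((L + L) + L) := by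
        refine (Set.encard_le_encard hcover).trans ?_
        refine (Set.encard_union_le _ _).trans ?_
        rw [Set.encard_singleton]
        gcongr
        refine (Set.encard_union_le _ _).trans ?_
        gcongr
        · exact (Set.encard_union_le _ _).trans (add_le_add (hL _) (hL _))
        · exact hL _
    _ = (3 * L + 1 : ℕ) := by push_cast; ring

lemma encard_hankel_row_le (S : Set ℕ) (n : ℕ) :
    {j | n + j ∈ S ∧ j ≤ n}.encard ≤ (S ∩ Set.Icc n (2 * n)).encard := by
  rw [← (add_right_injective n).encard_image]
  refine Set.encard_le_encard ?_
  rintro _ ⟨j, ⟨hjS, hjn⟩, rfl⟩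
  exact ⟨hjS, Nat.le_add_right n j, by simp only; omega⟩

theorem stmt_9 (S : Set ℕ) :
    (∃ (Q R : Set (ℕ × ℕ)) (k : ℕ), {p : ℕ × ℕ | p.1 + p.2 ∈ S} = Q ∪ R ∧
      (∀ i, {j | (i, j) ∈ Q}.encard ≤ k) ∧
      (∀ j, {i | (i, j) ∈ R}.encard ≤ k)) ↔
    (∃ L : ℕ, ∀ k : ℕ, (S ∩ Set.Ioc (2 ^ k / 2) (2 ^ k)).encard ≤ L) := by
  constructor
  · rintro ⟨Q, R, k, hH, hQ, hR⟩
    exact ⟨3 * k, encard_inter_dyadic_le_of_hankel_subset_union hH.subset hQ hR⟩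
  · rintro ⟨L, hL⟩
    have hrow (n : ℕ) : {j | n + j ∈ S ∧ j ≤ n}.encard ≤ (3 * L + 1 : ℕ) :=
      (encard_hankel_row_le S n).trans (encard_inter_Icc_two_mul_le hL n)
    refine ⟨{p | p.1 + p.2 ∈ S ∧ p.2 ≤ p.1}, {p | p.2 + p.1 ∈ S ∧ p.1 ≤ p.2},
      3 * L + 1, ?_, hrow, hrow⟩
    ext ⟨i, j⟩
    simp only [Set.mem_ofPred_eq, Set.mem_union, add_comm j i]
    constructor
    · intro h
      exact (le_total j i).imp (⟨h, ·⟩) (⟨h, ·⟩)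
    · rintro (⟨h, -⟩ | ⟨h, -⟩) <;> exact h
end

section
/- A set S ⊆ ℕ satisfies sup_{k≥0} |S ∩ (2^{k-1}, 2^k]| < ∞ if and only if S is a finite union of lacunary sets. -/
open scoped ENNReal ComplexOrder

def Lacunary (T : Set ℕ) : Prop :=
  ∃ q : ℝ, 1 < q ∧ ∀ a ∈ T, ∀ b ∈ T, a < b → q * a < b

/-!
A lacunary set of ratio `q` has fewer than `log_q 2 + 1` points in any set whose elements are
within a factor of two of each other, such as a dyadic block `(2 ^ (k-1), 2 ^ k]`; hence a finite
union of lacunary sets meets every block in boundedly many points. Conversely, if every block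
holds at most `L` points of `S`, colour `s ∈ S` by its rank inside its block and the parity of
the block index. Two points of one colour lie in distinct blocks of the same parity, hence two
blocks apart, so the larger is more than twice the smaller: each colour class is lacunary with
ratio `2`.
-/

open Finset in
theorem pow_card_sub_one_mul_le_max' {q : ℝ} (hq : 0 ≤ q) {T : Set ℕ}
    (hT : ∀ a ∈ T, ∀ b ∈ T, a < b → q * a < b) {F : Finset ℕ} (hFT : ↑F ⊆ T)
    (hne : F.Nonempty) {m : ℕ} (hm : ∀ x ∈ F, m ≤ x) :
    q ^ (#F - 1) * m ≤ F.max' hne := by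
  induction F using Finset.induction_on_max with
  | empty => exact absurd hne Finset.not_nonempty_empty
  | insert a s has ih =>
    have has' : a ∉ s := fun h => lt_irrefl a (has a h)
    have hmax : (insert a s).max' hne = a :=
      le_antisymm ((insert a s).max'_le _ _ fun x hx => by
        rcases Finset.mem_insert.mp hx with rfl | hx
        exacts [le_rfl, (has x hx).le]) ((insert a s).le_max' a (mem_insert_self a s))
    rw [hmax, card_insert_of_notMem has', Nat.add_sub_cancel]
    rcases s.eq_empty_or_nonempty with rfl | hs
    · simpa using hm a (mem_insert_self a ∅)
    have hsT : ↑s ⊆ T := fun x hx => hFT (by simp [Finset.mem_coe.mp hx])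
    have hms : ∀ x ∈ s, m ≤ x := fun x hx => hm x (mem_insert_of_mem hx)
    calc q ^ #s * m = q * (q ^ (#s - 1) * m) := by
          rw [← mul_assoc, ← pow_succ', Nat.sub_add_cancel hs.card_pos]
      _ ≤ q * (s.max' hs) := mul_le_mul_of_nonneg_left (ih hsT hs hms) hq
      _ ≤ a := (hT _ (hsT (s.max'_mem hs)) _ (hFT (mem_insert_self a s))
          (has _ (s.max'_mem hs))).le

theorem Lacunary.exists_encard_le {T : Set ℕ} (hT : Lacunary T) :
    ∃ C : ℕ, ∀ A ⊆ T, (∀ x ∈ A, ∀ y ∈ A, y < 2 * x) → A.encard ≤ C := by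
  obtain ⟨q, hq, hqT⟩ := hT
  obtain ⟨C, hC⟩ := pow_unbounded_of_one_lt (2 : ℝ) hq
  refine ⟨C, fun A hAT hA => ?_⟩
  rcases A.eq_empty_or_nonempty with rfl | ⟨x₀, hx₀⟩
  · simp
  have hfin : A.Finite := (Set.finite_Iio (2 * x₀)).subset fun y hy => hA x₀ hx₀ y hy
  rw [hfin.encard_eq_coe_toFinset_card, Nat.cast_le]
  set F := hfin.toFinset
  have hne : F.Nonempty := ⟨x₀, hfin.mem_toFinset.mpr hx₀⟩
  have hFT : ↑F ⊆ T := by simpa [F] using hAT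
  have hmem : ∀ x, x ∈ F ↔ x ∈ A := fun x => hfin.mem_toFinset
  have hspread : (F.max' hne : ℝ) < 2 * F.min' hne := by
    exact_mod_cast hA _ ((hmem _).mp (F.min'_mem hne)) _ ((hmem _).mp (F.max'_mem hne))
  have hmin_pos : (0 : ℝ) < F.min' hne := by
    have := hA _ ((hmem _).mp (F.min'_mem hne)) _ ((hmem _).mp (F.min'_mem hne))
    exact_mod_cast (by omega : 0 < F.min' hne)
  have hpow : q ^ (F.card - 1) < q ^ C := by
    refine lt_trans (lt_of_mul_lt_mul_right ?_ hmin_pos.le) hC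
    exact (pow_card_sub_one_mul_le_max' (by linarith) hqT hFT hne (F.min'_le)).trans_lt hspread
  have := (pow_lt_pow_iff_right₀ hq).mp hpow
  omega

theorem lt_two_mul_of_mem_Ioc_pow {k x y : ℕ} (hx : x ∈ Set.Ioc (2 ^ k / 2) (2 ^ k))
    (hy : y ∈ Set.Ioc (2 ^ k / 2) (2 ^ k)) : y < 2 * x := by
  have := hx.1; have := hy.2; omega

theorem mem_Ioc_pow_clog {s : ℕ} (hs : 1 ≤ s) :
    s ∈ Set.Ioc (2 ^ Nat.clog 2 s / 2) (2 ^ Nat.clog 2 s) := by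
  refine ⟨?_, Nat.le_pow_clog one_lt_two s⟩
  rcases hs.eq_or_lt with rfl | hs
  · simp
  have hlt := Nat.pow_pred_clog_lt_self one_lt_two hs
  have hpow : 2 ^ Nat.clog 2 s = 2 * 2 ^ (Nat.clog 2 s).pred := by
    rw [← pow_succ', Nat.pred_eq_sub_one, Nat.sub_add_cancel (Nat.clog_pos one_lt_two hs)]
  omega

theorem two_mul_lt_of_clog_add_two_le {a b : ℕ} (h : Nat.clog 2 a + 2 ≤ Nat.clog 2 b) :
    2 * a < b := by
  have hb : 1 ≤ b := by
    by_contra! hb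
    rw [Nat.clog_of_right_le_one (n := b) (by omega) 2] at h
    omega
  have ha := Nat.le_pow_clog one_lt_two a
  have hb' := (mem_Ioc_pow_clog hb).1
  have hpow : 2 ^ (Nat.clog 2 a + 2) ≤ 2 ^ Nat.clog 2 b := Nat.pow_le_pow_right two_pos h
  rw [pow_add] at hpow
  omega

noncomputable def blockRank (S : Set ℕ) (s : ℕ) : ℕ :=
  (S ∩ Set.Ioc (2 ^ Nat.clog 2 s / 2) (2 ^ Nat.clog 2 s) ∩ Set.Iio s).ncard

theorem blockRank_le {S : Set ℕ} {L : ℕ}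
    (hL : ∀ k : ℕ, (S ∩ Set.Ioc (2 ^ k / 2) (2 ^ k)).encard ≤ L) (s : ℕ) :
    blockRank S s ≤ L := by
  obtain ⟨hfin, hcard⟩ := Set.encard_le_coe_iff_finite_ncard_le.mp (hL (Nat.clog 2 s))
  exact (Set.ncard_le_ncard Set.inter_subset_left hfin).trans hcard

theorem blockRank_lt_blockRank {S : Set ℕ} {L : ℕ}
    (hL : ∀ k : ℕ, (S ∩ Set.Ioc (2 ^ k / 2) (2 ^ k)).encard ≤ L) {a b : ℕ} (ha : a ∈ S)
    (ha₁ : 1 ≤ a) (hab : a < b) (hclog : Nat.clog 2 a = Nat.clog 2 b) :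
    blockRank S a < blockRank S b := by
  unfold blockRank
  rw [hclog]
  have hfin := Set.finite_of_encard_le_coe (hL (Nat.clog 2 b))
  refine Set.ncard_lt_ncard ⟨Set.inter_subset_inter_right _ (Set.Iio_subset_Iio hab.le),
    fun hsub => lt_irrefl a (hsub ⟨⟨ha, ?_⟩, hab⟩).2⟩ (hfin.subset Set.inter_subset_left)
  rw [← hclog]
  exact mem_Ioc_pow_clog ha₁

theorem two_mul_lt_of_blockRank_eq {S : Set ℕ} {L : ℕ}
    (hL : ∀ k : ℕ, (S ∩ Set.Ioc (2 ^ k / 2) (2 ^ k)).encard ≤ L) {a b : ℕ} (ha : a ∈ S)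
    (hab : a < b) (hrank : blockRank S a = blockRank S b)
    (hpar : Nat.clog 2 a % 2 = Nat.clog 2 b % 2) : 2 * a < b := by
  rcases Nat.eq_zero_or_pos a with rfl | ha₁
  · omega
  rcases (Nat.clog_mono_right 2 hab.le).eq_or_lt with hclog | hclog
  · exact absurd hrank (blockRank_lt_blockRank hL ha ha₁ hab hclog).ne
  · exact two_mul_lt_of_clog_add_two_le (by omega)

theorem exists_lacunary_cover_of_color (S : Set ℕ) (n : ℕ) (c : ℕ → ℕ)
    (hc : ∀ s ∈ S, c s < n) (h : ∀ a ∈ S, ∀ b ∈ S, a < b → c a = c b → 2 * a < b) :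
    ∃ T : Fin n → Set ℕ, (∀ i, Lacunary (T i)) ∧ S = ⋃ i, T i := by
  refine ⟨fun i => {s ∈ S | c s = i}, fun i => ⟨2, one_lt_two, ?_⟩, ?_⟩
  · rintro a ⟨ha, hca⟩ b ⟨hb, hcb⟩ hab
    exact_mod_cast h a ha b hb hab (hca.trans hcb.symm)
  · ext s
    simp only [Set.mem_iUnion, Set.mem_ofPred_eq]
    exact ⟨fun hs => ⟨⟨c s, hc s hs⟩, hs, rfl⟩, fun ⟨_, hs, _⟩ => hs⟩

theorem stmt_10 (S : Set ℕ) :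
    (∃ L : ℕ, ∀ k : ℕ, (S ∩ Set.Ioc (2 ^ k / 2) (2 ^ k)).encard ≤ L) ↔
    (∃ (n : ℕ) (T : Fin n → Set ℕ), (∀ i, Lacunary (T i)) ∧ S = ⋃ i, T i) := by
  constructor
  · rintro ⟨L, hL⟩
    refine ⟨2 * L + 2, exists_lacunary_cover_of_color S _
      (fun s => 2 * blockRank S s + Nat.clog 2 s % 2) (fun s _ => ?_) fun a ha b _ hab hcol => ?_⟩
    · have := blockRank_le hL s
      omega
    · exact two_mul_lt_of_blockRank_eq hL ha hab (by omega) (by omega)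
  · rintro ⟨n, T, hT, rfl⟩
    choose C hC using fun i => (hT i).exists_encard_le
    refine ⟨∑ i, C i, fun k => ?_⟩
    calc ((⋃ i, T i) ∩ Set.Ioc (2 ^ k / 2) (2 ^ k)).encard
        = (⋃ i, T i ∩ Set.Ioc (2 ^ k / 2) (2 ^ k)).encard := by rw [Set.iUnion_inter]
      _ ≤ ∑ i, (T i ∩ Set.Ioc (2 ^ k / 2) (2 ^ k)).encard := Set.encard_iUnion_le_of_fintype _
      _ ≤ ∑ i, (C i : ℕ∞) := Finset.sum_le_sum fun i _ => hC i _ Set.inter_subset_left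
          fun x hx y hy => lt_two_mul_of_mem_Ioc_pow hx.2 hy.2
      _ = ↑(∑ i, C i) := by push_cast; rfl
end

section
/- For any square matrix T, the Schur multiplier norm satisfies ‖T‖_m ≤ ‖Δ(|T*|)‖^{1/2} · ‖Δ(|T|)‖^{1/2}, where Δ denotes the projection onto the diagonal and |T| = (T*T)^{1/2}. -/
open scoped ENNReal ComplexOrder Matrix

/-! Factor `T = K * Q` with `Q = |T|^{1/2}` and `K = T * (|T|^{1/2})⁺` (pseudo-inverse). Then
`Qᴴ * Q = |T|`, and `K * Kᴴ = T * |T|⁺ * Tᴴ` is a positive square root of `T * Tᴴ`, hence equals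
`|Tᴴ|`. For any factorization `K * Q`, `((K * Q) ⊙ X) v = ∑ c, diag (K · c) (X (Q c · ⊙ v))`, and
Cauchy–Schwarz in `c` bounds `‖((K * Q) ⊙ X) v‖²` by
`maxᵢ (K * Kᴴ)ᵢᵢ * ‖X‖² * maxⱼ (Qᴴ * Q)ⱼⱼ * ‖v‖²`. -/

open Matrix Finset
open scoped MatrixOrder

section

variable {m : Type*} [Fintype m] [DecidableEq m]

lemma matAbs_eq_cfc (T : Matrix m m ℂ) : matAbs T = cfc Real.sqrt (Tᴴ * T) := by
  rw [(posSemidef_conjTranspose_mul_self T).1.cfc_eq]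
  rfl

lemma cfc_sqrt_mul_self {B : Matrix m m ℂ} (hB : 0 ≤ B) : cfc Real.sqrt (B * B) = B := by
  have hBB : 0 ≤ B * B := by
    simpa only [(IsSelfAdjoint.of_nonneg hB).star_eq] using star_mul_self_nonneg B
  rw [← cfcₙ_eq_cfc, ← CFC.sqrt_eq_real_sqrt _ hBB, CFC.sqrt_mul_self B hB]

lemma cfc_mul_cfc {A : Matrix m m ℂ} (f g : ℝ → ℝ) :
    cfc f A * cfc g A = cfc (fun x => f x * g x) A :=
  (cfc_mul f g A (finite_real_spectrum.continuousOn f) (finite_real_spectrum.continuousOn g)).symm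

lemma mul_cfc_conjTranspose_mul_self_eq_self (T : Matrix m m ℂ) {p : ℝ → ℝ}
    (hp : ∀ x, 0 < x → p x = 1) : T * cfc p (Tᴴ * T) = T := by
  have hA : 0 ≤ Tᴴ * T := (posSemidef_conjTranspose_mul_self T).nonneg
  have hAp : Tᴴ * T * cfc p (Tᴴ * T) = Tᴴ * T := by
    calc Tᴴ * T * cfc p (Tᴴ * T) = cfc id (Tᴴ * T) * cfc p (Tᴴ * T) := by
          rw [cfc_id ℝ _ hA.isSelfAdjoint]
      _ = cfc (fun x => x * p x) (Tᴴ * T) := cfc_mul_cfc _ _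
      _ = cfc id (Tᴴ * T) := cfc_congr fun x hx => by
            rcases (spectrum_nonneg_of_nonneg hA hx).eq_or_lt with h | h
            · simp [← h]
            · simp [hp x h]
      _ = Tᴴ * T := cfc_id ℝ _ hA.isSelfAdjoint
  have h : T * (1 - cfc p (Tᴴ * T)) = 0 :=
    (conjTranspose_mul_self_mul_eq_zero T _).1 <| by
      rw [Matrix.mul_sub, Matrix.mul_one, hAp, sub_self]
  rw [Matrix.mul_sub, Matrix.mul_one, sub_eq_zero] at h
  exact h.symm

lemma sqrt_sqrt_pow_four {x : ℝ} (hx : 0 ≤ x) : √√x ^ 4 = x := by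
  rw [show 4 = 2 * 2 by rfl, pow_mul, Real.sq_sqrt (Real.sqrt_nonneg x), Real.sq_sqrt hx]

theorem exists_factorization_matAbs (T : Matrix m m ℂ) :
    ∃ K Q : Matrix m m ℂ, K * Q = T ∧ K * Kᴴ = matAbs Tᴴ ∧ Qᴴ * Q = matAbs T := by
  have hA : IsSelfAdjoint (Tᴴ * T) := (posSemidef_conjTranspose_mul_self T).1
  have cfc_conjTranspose (f : ℝ → ℝ) : (cfc f (Tᴴ * T))ᴴ = cfc f (Tᴴ * T) :=
    IsSelfAdjoint.star_eq (cfc_predicate f _)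
  -- `(√√x)⁻¹` vanishes at `0` since `0⁻¹ = 0`: this gives the pseudo-inverse of `|T|^{1/2}`.
  refine ⟨T * cfc (fun x => (√√x)⁻¹) (Tᴴ * T), cfc (fun x => √√x) (Tᴴ * T), ?_, ?_, ?_⟩
  · rw [Matrix.mul_assoc, cfc_mul_cfc]
    exact mul_cfc_conjTranspose_mul_self_eq_self T fun x hx => inv_mul_cancel₀ (by positivity)
  · set K := T * cfc (fun x => (√√x)⁻¹) (Tᴴ * T)
    set R := cfc (fun x => (√√x)⁻¹ * (√√x)⁻¹) (Tᴴ * T)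
    have hKK : K * Kᴴ = T * R * Tᴴ := by
      rw [conjTranspose_mul, cfc_conjTranspose]
      simp only [K, R, ← cfc_mul_cfc, Matrix.mul_assoc]
    have hsq : K * Kᴴ * (K * Kᴴ) = T * Tᴴ := by
      calc K * Kᴴ * (K * Kᴴ) = T * (R * cfc id (Tᴴ * T) * R) * Tᴴ := by
            rw [hKK, cfc_id ℝ _ hA]; simp only [Matrix.mul_assoc]
        _ = T * cfc (fun x => (√√x)⁻¹ * (√√x)⁻¹ * x * ((√√x)⁻¹ * (√√x)⁻¹)) (Tᴴ * T) * Tᴴ := by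
            rw [cfc_mul_cfc, cfc_mul_cfc]; rfl
        _ = T * Tᴴ := by
            rw [mul_cfc_conjTranspose_mul_self_eq_self T fun x hx => ?_]
            have h4 := sqrt_sqrt_pow_four hx.le
            have : 0 < √√x := by positivity
            field_simp
            linarith
    rw [matAbs_eq_cfc, conjTranspose_conjTranspose, ← hsq,
      cfc_sqrt_mul_self (posSemidef_self_mul_conjTranspose K).nonneg]
  · rw [cfc_conjTranspose, cfc_mul_cfc, matAbs_eq_cfc]
    exact cfc_congr fun x _ => Real.mul_self_sqrt (Real.sqrt_nonneg x)

lemma opNorm2_le_iff (A : Matrix m m ℂ) {C : ℝ} (hC : 0 ≤ C) :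
    opNorm2 A ≤ C ↔ ∀ v : m → ℂ, ∑ i, ‖(A *ᵥ v) i‖ ^ 2 ≤ C ^ 2 * ∑ j, ‖v j‖ ^ 2 := by
  have hsq (v : EuclideanSpace ℂ m) :
      ‖toEuclideanCLM (𝕜 := ℂ) A v‖ ≤ C * ‖v‖ ↔
        ∑ i, ‖(A *ᵥ v.ofLp) i‖ ^ 2 ≤ C ^ 2 * ∑ j, ‖v.ofLp j‖ ^ 2 := by
    rw [← sq_le_sq₀ (norm_nonneg _) (by positivity), mul_pow, EuclideanSpace.norm_sq_eq,
      EuclideanSpace.norm_sq_eq, ofLp_toEuclideanCLM]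
  exact (ContinuousLinearMap.opNorm_le_iff hC).trans
    ⟨fun h v => (hsq (WithLp.toLp 2 v)).1 (h _), fun h v => (hsq v).2 (h _)⟩

lemma sum_norm_sq_mulVec_le (X : Matrix m m ℂ) (w : m → ℂ) :
    ∑ i, ‖(X *ᵥ w) i‖ ^ 2 ≤ opNorm2 X ^ 2 * ∑ j, ‖w j‖ ^ 2 :=
  (opNorm2_le_iff X (norm_nonneg _)).1 le_rfl w

end

lemma norm_sum_mul_sq_le {ι : Type*} (s : Finset ι) (f g : ι → ℂ) :
    ‖∑ c ∈ s, f c * g c‖ ^ 2 ≤ (∑ c ∈ s, ‖f c‖ ^ 2) * ∑ c ∈ s, ‖g c‖ ^ 2 :=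
  calc ‖∑ c ∈ s, f c * g c‖ ^ 2 ≤ (∑ c ∈ s, ‖f c‖ * ‖g c‖) ^ 2 := by
        gcongr; exact (norm_sum_le _ _).trans_eq (by simp only [norm_mul])
    _ ≤ _ := sum_mul_sq_le_sq_mul_sq _ _ _

section

variable {m k : Type*} [Fintype k]

lemma re_mul_conjTranspose_apply_self (K : Matrix m k ℂ) (i : m) :
    ((K * Kᴴ) i i).re = ∑ c, ‖K i c‖ ^ 2 := by
  simp [mul_apply, Complex.re_sum, Complex.mul_conj', ← Complex.ofReal_pow]

lemma re_conjTranspose_mul_apply_self (Q : Matrix k m ℂ) (j : m) :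
    ((Qᴴ * Q) j j).re = ∑ c, ‖Q c j‖ ^ 2 := by
  simp [mul_apply, Complex.re_sum, Complex.conj_mul', ← Complex.ofReal_pow]

variable [Fintype m]

lemma hadamard_mul_mulVec_apply (K : Matrix m k ℂ) (Q : Matrix k m ℂ) (X : Matrix m m ℂ)
    (v : m → ℂ) (i : m) :
    ((K * Q) ⊙ X *ᵥ v) i = ∑ c, K i c * (X *ᵥ fun j => Q c j * v j) i := by
  simp only [mulVec, dotProduct, hadamard_apply, mul_apply, sum_mul, mul_sum]
  rw [sum_comm]
  exact sum_congr rfl fun c _ => sum_congr rfl fun j _ => by ring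

variable [DecidableEq m]

theorem opNorm2_hadamard_mul_le (K : Matrix m k ℂ) (Q : Matrix k m ℂ) (X : Matrix m m ℂ)
    {α β : ℝ} (hK : ∀ i, ((K * Kᴴ) i i).re ≤ α) (hQ : ∀ j, ((Qᴴ * Q) j j).re ≤ β) :
    opNorm2 ((K * Q) ⊙ X) ≤ √α * √β * opNorm2 X := by
  have le_sq_sqrt (a : ℝ) : a ≤ √a ^ 2 := Real.sq_sqrt'.symm ▸ le_max_left a 0
  have hrow (i : m) : ∑ c, ‖K i c‖ ^ 2 ≤ √α ^ 2 :=
    re_mul_conjTranspose_apply_self K i ▸ (hK i).trans (le_sq_sqrt α)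
  have hcol (j : m) : ∑ c, ‖Q c j‖ ^ 2 ≤ √β ^ 2 :=
    re_conjTranspose_mul_apply_self Q j ▸ (hQ j).trans (le_sq_sqrt β)
  refine (opNorm2_le_iff _ (mul_nonneg (by positivity) (norm_nonneg _))).2 fun v => ?_
  set W : k → m → ℂ := fun c j => Q c j * v j
  calc ∑ i, ‖((K * Q) ⊙ X *ᵥ v) i‖ ^ 2
      ≤ ∑ i, (∑ c, ‖K i c‖ ^ 2) * ∑ c, ‖(X *ᵥ W c) i‖ ^ 2 :=
        sum_le_sum fun i _ => hadamard_mul_mulVec_apply K Q X v i ▸ norm_sum_mul_sq_le _ _ _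
    _ ≤ ∑ i, √α ^ 2 * ∑ c, ‖(X *ᵥ W c) i‖ ^ 2 := by gcongr with i; exact hrow i
    _ = √α ^ 2 * ∑ c, ∑ i, ‖(X *ᵥ W c) i‖ ^ 2 := by rw [← mul_sum, sum_comm]
    _ ≤ √α ^ 2 * ∑ c, opNorm2 X ^ 2 * ∑ j, ‖W c j‖ ^ 2 := by
        gcongr with c; exact sum_norm_sq_mulVec_le X (W c)
    _ = √α ^ 2 * opNorm2 X ^ 2 * ∑ j, ‖v j‖ ^ 2 * ∑ c, ‖Q c j‖ ^ 2 := by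
        simp only [W, norm_mul, mul_pow, ← mul_sum, mul_assoc]
        rw [sum_comm]
        simp only [← sum_mul, mul_comm]
    _ ≤ √α ^ 2 * opNorm2 X ^ 2 * ∑ j, ‖v j‖ ^ 2 * √β ^ 2 := by gcongr with j; exact hcol j
    _ = (√α * √β * opNorm2 X) ^ 2 * ∑ j, ‖v j‖ ^ 2 := by rw [← sum_mul]; ring

theorem schurNorm_mul_le (K : Matrix m k ℂ) (Q : Matrix k m ℂ) {α β : ℝ}
    (hK : ∀ i, ((K * Kᴴ) i i).re ≤ α) (hQ : ∀ j, ((Qᴴ * Q) j j).re ≤ β) :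
    schurNorm (K * Q) ≤ √α * √β :=
  Real.iSup_le (fun X => (opNorm2_hadamard_mul_le K Q X.1 hK hQ).trans
    (mul_le_of_le_one_right (by positivity) X.2)) (by positivity)

end

theorem stmt_12 {n : ℕ} (T : Matrix (Fin n) (Fin n) ℂ) :
    schurNorm T ≤
      Real.sqrt (⨆ i, (matAbs Tᴴ i i).re) * Real.sqrt (⨆ i, (matAbs T i i).re) := by
  obtain ⟨K, Q, hKQ, hK, hQ⟩ := exists_factorization_matAbs T
  have hbdd (M : Matrix (Fin n) (Fin n) ℂ) : BddAbove (Set.range fun i => (M i i).re) :=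
    (Set.finite_range _).bddAbove
  calc schurNorm T = schurNorm (K * Q) := by rw [hKQ]
    _ ≤ _ := schurNorm_mul_le K Q (fun i => by rw [hK]; exact le_ciSup (hbdd _) i)
      (fun j => by rw [hQ]; exact le_ciSup (hbdd _) j)
end

section
/- If T is a self-adjoint n×n matrix, then its Schur multiplier norm satisfies ‖T‖_m ≤ max_i ⟨|T| e_i, e_i⟩. -/
/-!
Diagonalise `T = U diag(λ) Uᴴ` and put `S = U diag(√|λ|)`. Then `T = S diag(sign λ) Sᴴ` and
`|T| = S Sᴴ`, so `T ∘ X = ∑ₖ sign(λₖ) Dₖ X Dₖᴴ`, where `Dₖ` is the diagonal matrix carrying the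
`k`-th column of `S`. Pairing `(T ∘ X) u` with `v` and applying Cauchy–Schwarz in `k` bounds
`‖T ∘ X‖` by `‖X‖` times the largest row sum `∑ₖ |Sᵢₖ|² = ⟨|T| eᵢ, eᵢ⟩`.
-/

open scoped ENNReal ComplexOrder

open Matrix

namespace Matrix.IsHermitian

variable {m 𝕜 : Type*} [Fintype m] [DecidableEq m] [RCLike 𝕜] {T : Matrix m m 𝕜}

noncomputable def sqrtAbsFactor (hT : T.IsHermitian) : Matrix m m 𝕜 :=
  (hT.eigenvectorUnitary : Matrix m m 𝕜) * diagonal fun k => (√|hT.eigenvalues k| : 𝕜)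

lemma sqrtAbsFactor_mul_diagonal_mul_conjTranspose (hT : T.IsHermitian) (f : ℝ → ℝ) :
    hT.sqrtAbsFactor * diagonal (fun k => (f (hT.eigenvalues k) : 𝕜)) * hT.sqrtAbsFactorᴴ =
      cfc (fun x => |x| * f x) T := by
  set U : Matrix m m 𝕜 := (hT.eigenvectorUnitary : Matrix m m 𝕜)
  set D : Matrix m m 𝕜 := diagonal fun k => (√|hT.eigenvalues k| : 𝕜)
  calc hT.sqrtAbsFactor * diagonal (fun k => (f (hT.eigenvalues k) : 𝕜)) * hT.sqrtAbsFactorᴴ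
      = U * (D * diagonal (fun k => (f (hT.eigenvalues k) : 𝕜)) * Dᴴ) * star U := by
        simp only [sqrtAbsFactor, conjTranspose_mul, star_eq_conjTranspose, Matrix.mul_assoc, U, D]
    _ = cfc (fun x => |x| * f x) T := by
      rw [hT.cfc_eq, IsHermitian.cfc, Unitary.conjStarAlgAut_apply, diagonal_conjTranspose,
        diagonal_mul_diagonal, diagonal_mul_diagonal]
      congr 3 with k
      simp only [Pi.star_apply, RCLike.star_def, RCLike.conj_ofReal, Function.comp_apply]
      rw [mul_right_comm, ← RCLike.ofReal_mul, Real.mul_self_sqrt (abs_nonneg _)]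
      push_cast
      ring

lemma eq_cfc_abs_mul_sign (hT : T.IsHermitian) :
    T = cfc (fun x => |x| * (SignType.sign x : ℝ)) T := by
  simp only [abs_mul_sign]
  exact (cfc_id' ℝ T).symm

end Matrix.IsHermitian

lemma matAbs_eq_cfc_abs {m : Type*} [Fintype m] [DecidableEq m] {T : Matrix m m ℂ}
    (hT : T.IsHermitian) : matAbs T = cfc (fun x : ℝ => |x|) T := by
  have hTT := (Matrix.posSemidef_conjTranspose_mul_self T).1
  calc matAbs T = cfc Real.sqrt (Tᴴ * T) := (hTT.cfc_eq _).symm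
    _ = cfc (Real.sqrt ∘ fun x => x * x) T := by
      rw [cfc_comp _ _ T hT.isSelfAdjoint, cfc_mul _ _ T, cfc_id' ℝ T, hT.eq]
    _ = cfc (fun x : ℝ => |x|) T := by simp only [Function.comp_def, Real.sqrt_mul_self_eq_abs]

namespace Matrix

lemma re_mul_conjTranspose_self_apply {m κ : Type*} [Fintype κ] (S : Matrix m κ ℂ) (i : m) :
    ((S * Sᴴ) i i).re = ∑ k, ‖S i k‖ ^ 2 := by
  simp [mul_apply, Complex.mul_conj, Complex.normSq_eq_norm_sq, -Complex.ofReal_pow]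

variable {m κ : Type*} [Fintype m] [DecidableEq m] [Fintype κ]

lemma hadamard_mul_diagonal_mul_conjTranspose [DecidableEq κ] {R : Type*} [CommSemiring R]
    [StarRing R] (S : Matrix m κ R) (ε : κ → R) (X : Matrix m m R) :
    (S * diagonal ε * Sᴴ) ⊙ X =
      ∑ k, ε k • (diagonal (fun i => S i k) * X * (diagonal fun i => S i k)ᴴ) := by
  ext i j
  simp only [hadamard_apply, Matrix.sum_apply, smul_apply, diagonal_conjTranspose, mul_diagonal,
    diagonal_mul, Pi.star_apply, smul_eq_mul]
  rw [mul_apply, Finset.sum_mul]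
  simp only [mul_diagonal, conjTranspose_apply]
  exact Finset.sum_congr rfl fun k _ => by ring

variable {𝕜 : Type*} [RCLike 𝕜]

lemma norm_toEuclideanCLM_diagonal_sq (w : m → 𝕜) (u : EuclideanSpace 𝕜 m) :
    ‖toEuclideanCLM (𝕜 := 𝕜) (diagonal w) u‖ ^ 2 = ∑ i, ‖w i‖ ^ 2 * ‖u i‖ ^ 2 := by
  simp [EuclideanSpace.norm_sq_eq, mulVec_diagonal, norm_mul, mul_pow]

lemma sum_norm_toEuclideanCLM_conjTranspose_diagonal_sq_le (S : Matrix m κ 𝕜) {c : ℝ}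
    (hS : ∀ i, ∑ k, ‖S i k‖ ^ 2 ≤ c) (u : EuclideanSpace 𝕜 m) :
    ∑ k, ‖toEuclideanCLM (𝕜 := 𝕜) (diagonal fun i => S i k)ᴴ u‖ ^ 2 ≤ c * ‖u‖ ^ 2 :=
  calc ∑ k, ‖toEuclideanCLM (𝕜 := 𝕜) (diagonal fun i => S i k)ᴴ u‖ ^ 2
      = ∑ i, (∑ k, ‖S i k‖ ^ 2) * ‖u i‖ ^ 2 := by
        simp only [diagonal_conjTranspose, norm_toEuclideanCLM_diagonal_sq, Pi.star_apply,
          norm_star, Finset.sum_mul]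
        exact Finset.sum_comm
    _ ≤ ∑ i, c * ‖u i‖ ^ 2 := by gcongr with i; exact hS i
    _ = c * ‖u‖ ^ 2 := by rw [← Finset.mul_sum, EuclideanSpace.norm_sq_eq]

lemma norm_inner_toEuclideanCLM_hadamard_le [DecidableEq κ] (S : Matrix m κ 𝕜) {ε : κ → 𝕜}
    (hε : ∀ k, ‖ε k‖ ≤ 1) {c : ℝ} (hc : 0 ≤ c) (hS : ∀ i, ∑ k, ‖S i k‖ ^ 2 ≤ c)
    (X : Matrix m m 𝕜) (u v : EuclideanSpace 𝕜 m) :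
    ‖inner 𝕜 (toEuclideanCLM (𝕜 := 𝕜) ((S * diagonal ε * Sᴴ) ⊙ X) u) v‖ ≤
      c * ‖toEuclideanCLM (𝕜 := 𝕜) X‖ * (‖u‖ * ‖v‖) := by
  set A : κ → EuclideanSpace 𝕜 m →L[𝕜] EuclideanSpace 𝕜 m :=
    fun k => toEuclideanCLM (𝕜 := 𝕜) (diagonal fun i => S i k)ᴴ
  set Ψ := toEuclideanCLM (𝕜 := 𝕜) X
  have expand : inner 𝕜 (toEuclideanCLM (𝕜 := 𝕜) ((S * diagonal ε * Sᴴ) ⊙ X) u) v =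
      ∑ k, star (ε k) * inner 𝕜 (Ψ (A k u)) (A k v) := by
    simp only [hadamard_mul_diagonal_mul_conjTranspose, map_sum, map_smul, map_mul,
      _root_.sum_apply, _root_.smul_apply, sum_inner, inner_smul_left]
    refine Finset.sum_congr rfl fun k _ => ?_
    rw [mul_apply_eq_comp, mul_apply_eq_comp,
      ← ContinuousLinearMap.adjoint_inner_right, ← ContinuousLinearMap.star_eq_adjoint, ← map_star,
      star_eq_conjTranspose, RCLike.star_def]
  calc ‖inner 𝕜 (toEuclideanCLM (𝕜 := 𝕜) ((S * diagonal ε * Sᴴ) ⊙ X) u) v‖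
      ≤ ∑ k, ‖Ψ‖ * (‖A k u‖ * ‖A k v‖) := by
        rw [expand]
        refine (norm_sum_le _ _).trans (Finset.sum_le_sum fun k _ => ?_)
        rw [norm_mul, norm_star, ← mul_assoc]
        calc ‖ε k‖ * ‖inner 𝕜 (Ψ (A k u)) (A k v)‖ ≤ 1 * (‖Ψ‖ * ‖A k u‖ * ‖A k v‖) := by
              gcongr
              · exact hε k
              · exact (norm_inner_le_norm _ _).trans (by gcongr; exact Ψ.le_opNorm _)
          _ = _ := by ring
    _ ≤ ‖Ψ‖ * (√(∑ k, ‖A k u‖ ^ 2) * √(∑ k, ‖A k v‖ ^ 2)) := by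
        rw [← Finset.mul_sum]
        gcongr
        exact Real.sum_mul_le_sqrt_mul_sqrt _ _ _
    _ ≤ ‖Ψ‖ * (√(c * ‖u‖ ^ 2) * √(c * ‖v‖ ^ 2)) := by
        gcongr <;> exact sum_norm_toEuclideanCLM_conjTranspose_diagonal_sq_le S hS _
    _ = c * ‖Ψ‖ * (‖u‖ * ‖v‖) := by
        rw [Real.sqrt_mul hc, Real.sqrt_mul hc, Real.sqrt_sq (norm_nonneg _),
          Real.sqrt_sq (norm_nonneg _)]
        linear_combination (‖Ψ‖ * ‖u‖ * ‖v‖) * Real.mul_self_sqrt hc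

end Matrix

section SchurNorm

variable {m κ : Type*} [Fintype m] [DecidableEq m] [Fintype κ] [DecidableEq κ]

lemma opNorm2_hadamard_mul_diagonal_mul_conjTranspose_le (S : Matrix m κ ℂ) {ε : κ → ℂ}
    (hε : ∀ k, ‖ε k‖ ≤ 1) {c : ℝ} (hc : 0 ≤ c) (hS : ∀ i, ∑ k, ‖S i k‖ ^ 2 ≤ c)
    (X : Matrix m m ℂ) : opNorm2 ((S * diagonal ε * Sᴴ).hadamard X) ≤ c * opNorm2 X :=
  ContinuousLinearMap.opNorm_le_of_re_inner_le (by unfold opNorm2; positivity)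
    fun u v hu hv => (RCLike.re_le_norm _).trans <| by
      simpa [hu, hv, opNorm2] using norm_inner_toEuclideanCLM_hadamard_le S hε hc hS X u v

lemma schurNorm_mul_diagonal_mul_conjTranspose_le (S : Matrix m κ ℂ) {ε : κ → ℂ}
    (hε : ∀ k, ‖ε k‖ ≤ 1) : schurNorm (S * diagonal ε * Sᴴ) ≤ ⨆ i, ((S * Sᴴ) i i).re := by
  have hc : 0 ≤ ⨆ i, ((S * Sᴴ) i i).re :=
    Real.iSup_nonneg fun i => by rw [re_mul_conjTranspose_self_apply]; positivity
  have hS (i : m) : ∑ k, ‖S i k‖ ^ 2 ≤ ⨆ i, ((S * Sᴴ) i i).re := by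
    rw [← re_mul_conjTranspose_self_apply]
    exact le_ciSup (Set.finite_range fun i => ((S * Sᴴ) i i).re).bddAbove i
  refine Real.iSup_le (fun X => ?_) hc
  calc opNorm2 ((S * diagonal ε * Sᴴ).hadamard X.1)
      ≤ (⨆ i, ((S * Sᴴ) i i).re) * opNorm2 X.1 :=
        opNorm2_hadamard_mul_diagonal_mul_conjTranspose_le S hε hc hS X.1
    _ ≤ ⨆ i, ((S * Sᴴ) i i).re := mul_le_of_le_one_right hc X.2

end SchurNorm

theorem stmt_13 {n : ℕ} (T : Matrix (Fin n) (Fin n) ℂ) (hT : T.IsHermitian) :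
    schurNorm T ≤ ⨆ i, (matAbs T i i).re := by
  have hAbs : matAbs T = hT.sqrtAbsFactor * hT.sqrtAbsFactorᴴ := by
    simpa [matAbs_eq_cfc_abs hT] using (hT.sqrtAbsFactor_mul_diagonal_mul_conjTranspose 1).symm
  have hT' : T = hT.sqrtAbsFactor *
      diagonal (fun k => ((SignType.sign (hT.eigenvalues k) : ℝ) : ℂ)) * hT.sqrtAbsFactorᴴ :=
    hT.eq_cfc_abs_mul_sign.trans (hT.sqrtAbsFactor_mul_diagonal_mul_conjTranspose _).symm
  have hsign (x : ℝ) : ‖((SignType.sign x : ℝ) : ℂ)‖ ≤ 1 := by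
    rcases SignType.sign x with _ | _ | _ <;> simp
  rw [hAbs, congrArg schurNorm hT']
  exact schurNorm_mul_diagonal_mul_conjTranspose_le _ fun k => hsign _
end

section
/- Let J_n be the n×n all-ones matrix and T = J_n − I (the adjacency matrix of the complete graph). Then the Schur multiplier norm of T equals 2 − 2/n. -/
open scoped ENNReal ComplexOrder

/-!
Write `T = J - 1`, so that `T ⊙ X = X - Δ(X)` with `Δ(X)` the diagonal part of `X`. Labelling the
indices injectively by `ZMod n` and setting `U k = diag(ψ(k eᵢ))` for the standard additive
character `ψ`, orthogonality of characters gives `Δ(X) = n⁻¹ ∑ₖ U kᴴ X U k`. Hence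
`X - Δ(X) = n⁻¹ ∑_{k ≠ 0} (X - U kᴴ X U k)` has norm at most `n⁻¹ (n - 1) 2 ‖X‖ = (2 - 2/n) ‖X‖`.
The bound is attained at the reflection `R = 1 - (2/n) J`: it is unitary, and `T ⊙ R` maps the
all-ones vector to `-(2 - 2/n)` times itself.
-/

open scoped Matrix Matrix.Norms.L2Operator

namespace Matrix

variable {ι : Type*}

section cardinality

variable [Fintype ι]

lemma of_one_mul_of_one {α : Type*} [NonAssocSemiring α] :
    (of fun _ _ => 1 : Matrix ι ι α) * (of fun _ _ => 1) =
      (Fintype.card ι : α) • (of fun _ _ => 1 : Matrix ι ι α) := by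
  ext i j
  simp [mul_apply]

lemma of_one_mulVec_one {α : Type*} [NonAssocSemiring α] :
    (of fun _ _ => 1 : Matrix ι ι α) *ᵥ 1 = (Fintype.card ι : α) • 1 := by
  ext i
  simp [mulVec, dotProduct]

variable [Nonempty ι]

lemma two_div_card_mul_card : (2 / Fintype.card ι : ℂ) * Fintype.card ι = 2 :=
  div_mul_cancel₀ _ (Nat.cast_ne_zero.2 Fintype.card_ne_zero)

lemma two_sub_two_div_card_nonneg : (0 : ℝ) ≤ 2 - 2 / Fintype.card ι :=
  sub_nonneg.2 (div_le_self zero_le_two (Nat.one_le_cast.2 Fintype.card_pos))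

end cardinality

variable [DecidableEq ι]

lemma ite_zero_one_hadamard (X : Matrix ι ι ℂ) :
    (of fun i j : ι => if i = j then (0 : ℂ) else 1) ⊙ X = X - diagonal (diag X) := by
  ext i j
  rcases eq_or_ne i j with rfl | hij <;> simp [*]

section phaseDiagonal

variable {N : ℕ} [NeZero N]

noncomputable def phaseDiagonal (e : ι → ZMod N) (k : ZMod N) : Matrix ι ι ℂ :=
  diagonal fun i => ZMod.stdAddChar (k * e i)

lemma phaseDiagonal_zero (e : ι → ZMod N) : phaseDiagonal e 0 = 1 := by
  simp [phaseDiagonal]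

variable [Fintype ι]

lemma norm_phaseDiagonal_le (e : ι → ZMod N) (k : ZMod N) : ‖phaseDiagonal e k‖ ≤ 1 := by
  rw [phaseDiagonal, l2_opNorm_diagonal]
  exact pi_norm_le_iff_of_nonneg zero_le_one |>.2 fun i => by
    rw [ZMod.stdAddChar_apply, Circle.norm_coe]

lemma norm_sub_conjTranspose_phaseDiagonal_mul_mul_le (e : ι → ZMod N) (k : ZMod N)
    (X : Matrix ι ι ℂ) : ‖X - (phaseDiagonal e k)ᴴ * X * phaseDiagonal e k‖ ≤ 2 * ‖X‖ :=
  calc ‖X - (phaseDiagonal e k)ᴴ * X * phaseDiagonal e k‖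
      ≤ ‖X‖ + ‖(phaseDiagonal e k)ᴴ‖ * ‖X‖ * ‖phaseDiagonal e k‖ :=
        (norm_sub_le _ _).trans (add_le_add_right norm_mul₃_le _)
    _ ≤ ‖X‖ + 1 * ‖X‖ * 1 := by
        rw [l2_opNorm_conjTranspose]
        gcongr <;> exact norm_phaseDiagonal_le e k
    _ = 2 * ‖X‖ := by ring

lemma conjTranspose_phaseDiagonal_mul_mul_apply (e : ι → ZMod N) (k : ZMod N)
    (X : Matrix ι ι ℂ) (i j : ι) :
    ((phaseDiagonal e k)ᴴ * X * phaseDiagonal e k) i j =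
      ZMod.stdAddChar (k * (e j - e i)) * X i j := by
  simp only [phaseDiagonal, diagonal_conjTranspose, mul_diagonal, diagonal_mul, Pi.star_apply,
    RCLike.star_def, ← AddChar.map_neg_eq_conj]
  rw [mul_sub, sub_eq_neg_add, AddChar.map_add_eq_mul]
  ring

lemma diagonal_diag_eq_smul_sum_phaseDiagonal {e : ι → ZMod N} (he : Function.Injective e)
    (X : Matrix ι ι ℂ) :
    diagonal (diag X) = (N : ℂ)⁻¹ • ∑ k, (phaseDiagonal e k)ᴴ * X * phaseDiagonal e k := by
  ext i j
  simp only [smul_apply, sum_apply, conjTranspose_phaseDiagonal_mul_mul_apply, ← Finset.sum_mul,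
    AddChar.sum_mulShift _ (ZMod.isPrimitive_stdAddChar N), ZMod.card, sub_eq_zero, he.eq_iff,
    smul_eq_mul]
  rcases eq_or_ne i j with rfl | hij
  · simp [NeZero.ne]
  · simp [hij, hij.symm]

lemma sub_diagonal_diag_eq_smul_sum_phaseDiagonal {e : ι → ZMod N} (he : Function.Injective e)
    (X : Matrix ι ι ℂ) :
    X - diagonal (diag X) =
      (N : ℂ)⁻¹ • ∑ k, (X - (phaseDiagonal e k)ᴴ * X * phaseDiagonal e k) := by
  rw [Finset.sum_sub_distrib, smul_sub, diagonal_diag_eq_smul_sum_phaseDiagonal he,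
    Finset.sum_const, Finset.card_univ, ZMod.card, ← Nat.cast_smul_eq_nsmul ℂ, smul_smul,
    inv_mul_cancel₀ (Nat.cast_ne_zero.2 (NeZero.ne N)), one_smul]

lemma norm_sub_diagonal_diag_le_of_injective {e : ι → ZMod N} (he : Function.Injective e)
    (X : Matrix ι ι ℂ) : ‖X - diagonal (diag X)‖ ≤ (2 - 2 / N) * ‖X‖ := by
  set U := phaseDiagonal e
  have hzero : X - (U 0)ᴴ * X * U 0 = 0 := by simp [U, phaseDiagonal_zero]
  calc ‖X - diagonal (diag X)‖
      = (N : ℝ)⁻¹ * ‖∑ k ∈ Finset.univ.erase 0, (X - (U k)ᴴ * X * U k)‖ := by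
        rw [sub_diagonal_diag_eq_smul_sum_phaseDiagonal he, norm_smul, norm_inv,
          Complex.norm_natCast,
          ← Finset.sum_erase Finset.univ (f := fun k => X - (U k)ᴴ * X * U k) hzero]
    _ ≤ (N : ℝ)⁻¹ * ((N - 1 : ℕ) • (2 * ‖X‖)) := by
        gcongr
        refine (norm_sum_le _ _).trans (Finset.sum_le_card_nsmul _ _ _ fun k _ =>
          norm_sub_conjTranspose_phaseDiagonal_mul_mul_le e k X) |>.trans ?_
        rw [Finset.card_erase_of_mem (Finset.mem_univ _), Finset.card_univ, ZMod.card]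
    _ = (2 - 2 / N) * ‖X‖ := by
        have hN : (N : ℝ) ≠ 0 := Nat.cast_ne_zero.2 (NeZero.ne N)
        rw [nsmul_eq_mul, Nat.cast_pred (Nat.pos_of_neZero N)]
        field_simp

end phaseDiagonal

variable [Fintype ι]

lemma norm_le_l2_opNorm_of_mulVec_eq_smul {𝕜 : Type*} [RCLike 𝕜]
    {A : Matrix ι ι 𝕜} {v : ι → 𝕜} {c : 𝕜} (hv : v ≠ 0) (hAv : A *ᵥ v = c • v) :
    ‖c‖ ≤ ‖A‖ := by
  have hpos : 0 < ‖WithLp.toLp 2 v‖ := norm_pos_iff.2 ((WithLp.toLp_eq_zero 2).not.2 hv)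
  have h := A.l2_opNorm_mulVec (WithLp.toLp 2 v)
  rw [WithLp.ofLp_toLp, hAv, map_smul, norm_smul] at h
  exact le_of_mul_le_mul_right h hpos

lemma norm_sub_diagonal_diag_le [Nonempty ι] (X : Matrix ι ι ℂ) :
    ‖X - diagonal (diag X)‖ ≤ (2 - 2 / Fintype.card ι) * ‖X‖ := by
  have : NeZero (Fintype.card ι) := ⟨Fintype.card_ne_zero⟩
  exact norm_sub_diagonal_diag_le_of_injective
    ((ZMod.finEquiv _).injective.comp (Fintype.equivFin ι).injective) X

variable (ι) in
noncomputable def onesReflection : Matrix ι ι ℂ :=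
  1 - (2 / Fintype.card ι : ℂ) • of fun _ _ => 1

lemma conjTranspose_onesReflection : (onesReflection ι)ᴴ = onesReflection ι := by
  ext i j
  simp [onesReflection, one_apply, apply_ite, eq_comm]

lemma diagonal_diag_onesReflection :
    diagonal (diag (onesReflection ι)) = (1 - 2 / Fintype.card ι : ℂ) • 1 := by
  ext i j
  rcases eq_or_ne i j with rfl | hij <;> simp [onesReflection, *]

variable [Nonempty ι]

lemma onesReflection_mul_self : onesReflection ι * onesReflection ι = 1 := by
  rw [onesReflection, sub_mul, mul_sub, mul_sub, one_mul, mul_one, one_mul, smul_mul_smul_comm,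
    of_one_mul_of_one, smul_smul, mul_assoc, two_div_card_mul_card, mul_two, add_smul]
  abel

lemma norm_onesReflection : ‖onesReflection ι‖ = 1 :=
  CStarRing.norm_of_mem_unitary <| Unitary.mem_iff.2
    ⟨by rw [star_eq_conjTranspose, conjTranspose_onesReflection, onesReflection_mul_self],
     by rw [star_eq_conjTranspose, conjTranspose_onesReflection, onesReflection_mul_self]⟩

lemma onesReflection_mulVec_one : onesReflection ι *ᵥ 1 = -1 := by
  rw [onesReflection, sub_mulVec, one_mulVec, smul_mulVec, of_one_mulVec_one, smul_smul,
    two_div_card_mul_card, two_smul]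
  abel

lemma le_norm_ite_zero_one_hadamard_onesReflection :
    2 - 2 / Fintype.card ι ≤
      ‖(of fun i j : ι => if i = j then (0 : ℂ) else 1) ⊙ onesReflection ι‖ := by
  have hmulVec : ((of fun i j : ι => if i = j then (0 : ℂ) else 1) ⊙ onesReflection ι) *ᵥ 1 =
      (-(2 - 2 / Fintype.card ι : ℂ)) • 1 := by
    rw [ite_zero_one_hadamard, sub_mulVec, onesReflection_mulVec_one,
      diagonal_diag_onesReflection, smul_mulVec, one_mulVec]
    module
  have := norm_le_l2_opNorm_of_mulVec_eq_smul one_ne_zero hmulVec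
  rwa [norm_neg, ← Complex.ofReal_natCast, ← Complex.ofReal_ofNat, ← Complex.ofReal_div,
    ← Complex.ofReal_sub, Complex.norm_real, Real.norm_of_nonneg two_sub_two_div_card_nonneg]
    at this

end Matrix

lemma schurNorm_eq_of_forall_le_of_le {m : Type*} [Fintype m] [DecidableEq m]
    {M : Matrix m m ℂ} {c : ℝ} (hle : ∀ X : Matrix m m ℂ, ‖X‖ ≤ 1 → ‖M ⊙ X‖ ≤ c)
    {X₀ : Matrix m m ℂ} (hX₀ : ‖X₀‖ ≤ 1) (hc : c ≤ ‖M ⊙ X₀‖) : schurNorm M = c := by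
  have : Nonempty {X : Matrix m m ℂ // opNorm2 X ≤ 1} := ⟨⟨X₀, hX₀⟩⟩
  exact le_antisymm (ciSup_le fun X => hle X.1 X.2)
    (le_ciSup_of_le ⟨c, Set.forall_mem_range.2 fun X => hle X.1 X.2⟩ ⟨X₀, hX₀⟩ hc)

theorem schurNorm_ite_zero_one {ι : Type*} [Fintype ι] [DecidableEq ι] [Nonempty ι] :
    schurNorm (Matrix.of fun i j : ι => if i = j then (0 : ℂ) else 1) =
      2 - 2 / Fintype.card ι := by
  refine schurNorm_eq_of_forall_le_of_le (fun X hX => ?_) Matrix.norm_onesReflection.le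
    Matrix.le_norm_ite_zero_one_hadamard_onesReflection
  rw [Matrix.ite_zero_one_hadamard]
  exact (Matrix.norm_sub_diagonal_diag_le X).trans
    (mul_le_of_le_one_right Matrix.two_sub_two_div_card_nonneg hX)

theorem stmt_15 {n : ℕ} (hn : 0 < n) :
    schurNorm (Matrix.of fun i j : Fin n => if i = j then (0 : ℂ) else 1) =
      2 - 2 / n := by
  have : Nonempty (Fin n) := ⟨⟨0, hn⟩⟩
  simpa using schurNorm_ite_zero_one (ι := Fin n)
end
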